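/- arXiv:2603.06355 — 5 statements merged into one kernel-verified Lean document; each statement's English description precedes it below -/
import Mathlib

section
/- Let f : A → B be a function, X a simplicial complex on A, and Y a simplicial complex on B. Then f^{**}(X) ⊆ Y if and only if X ⊆ f^{¡*}(Y). (This is the adjunction f^{**} ⊣ f^{¡*}.) -/
/-- A (combinatorial) simplicial complex on `A`: a family of subsets closed
under taking subsets. -/
def IsSimplicialComplex {A : Type*} (X : Set (Set A)) : Prop :=
  ∀ F ∈ X, ∀ G ⊆ F, G ∈ X

/-- The `f`-core of a subset `D ⊆ A`: the set of `b ∈ B` whose full fiber is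
contained in `D`. -/
def fCore {A B : Type*} (f : A → B) (D : Set A) : Set B :=
  {b : B | f ⁻¹' {b} ⊆ D}

/-- The functor `f^{!!}`: the simplicial complex generated by the images of
faces of `X`. -/
def shriekShriek {A B : Type*} (f : A → B) (X : Set (Set A)) : Set (Set B) :=
  {C : Set B | ∃ D ∈ X, C ⊆ f '' D}

/-- The functor `f^{**}`: subsets of `B` whose preimage is a face of `X`. -/
def starStar {A B : Type*} (f : A → B) (X : Set (Set A)) : Set (Set B) :=
  {C : Set B | f ⁻¹' C ∈ X}

/-- The functor `f^{¡¡}`: subsets `C ⊆ B` such that every `D` with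
`fCore f D = C` is a face of `X`. -/
def coCo {A B : Type*} (f : A → B) (X : Set (Set A)) : Set (Set B) :=
  {C : Set B | ∀ D : Set A, fCore f D = C → D ∈ X}

/-- The functor `f^{!*}`: subsets of `A` whose image is a face of `Y`. -/
def shriekStar {A B : Type*} (f : A → B) (Y : Set (Set B)) : Set (Set A) :=
  {D : Set A | f '' D ∈ Y}

/-- The functor `f^{¡*}`: subsets of `A` whose `f`-core is a face of `Y`. -/
def coStar {A B : Type*} (f : A → B) (Y : Set (Set B)) : Set (Set A) :=
  {D : Set A | fCore f D ∈ Y}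

/-- The Alexander dual of a family of subsets. -/
def alexDual {A : Type*} (X : Set (Set A)) : Set (Set A) :=
  {F : Set A | Fᶜ ∉ X}

/-- The adjunction `f^{**} ⊣ f^{¡*}`. -/
theorem starStar_adj_coStar {A B : Type*} (f : A → B)
    (X : Set (Set A)) (hX : IsSimplicialComplex X)
    (Y : Set (Set B)) (hY : IsSimplicialComplex Y) :
    starStar f X ⊆ Y ↔ X ⊆ coStar f Y := by
  constructor
  · intro h D hD
    refine h (hX D hD _ ?_)
    intro a ha
    exact ha rfl
  · intro h C hC
    have h1 : fCore f (f ⁻¹' C) ∈ Y := h hC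
    refine hY _ h1 C ?_
    intro b hb a ha
    have : f a = b := ha
    simpa [Set.mem_preimage, this] using hb
end

section
/- Let f : A → B be a function, X a simplicial complex on A, and Y a simplicial complex on B. Then f^{¡*}(Y) ⊆ X if and only if Y ⊆ f^{¡¡}(X). (This is the adjunction f^{¡*} ⊣ f^{¡¡}.) -/
/-- The adjunction `f^{¡*} ⊣ f^{¡¡}`. -/
theorem coStar_adj_coCo {A B : Type*} (f : A → B)
    (X : Set (Set A)) (hX : IsSimplicialComplex X)
    (Y : Set (Set B)) (hY : IsSimplicialComplex Y) :
    coStar f Y ⊆ X ↔ Y ⊆ coCo f X := by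
  constructor
  · intro h C hC D hD
    exact h (show fCore f D ∈ Y from hD ▸ hC)
  · intro h D hD
    exact h hD D rfl
end

section
/- Let f : A → B be a function and X a simplicial complex on A. Then f^{!!}(X^∨) = (f^{¡¡}(X))^∨, i.e., Alexander duality interchanges the functors f^{!!} and f^{¡¡}. -/
/-- Alexander duality interchanges `f^{!!}` and `f^{¡¡}`. -/
theorem shriekShriek_alexDual {A B : Type*} (f : A → B)
    (X : Set (Set A)) (hX : IsSimplicialComplex X) :
    shriekShriek f (alexDual X) = alexDual (coCo f X) := by
  ext C
  constructor
  · rintro ⟨D, hD, hC⟩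
    intro hmem
    apply hD
    have hcore : fCore f (Dᶜ ∪ f ⁻¹' Cᶜ) = Cᶜ := by
      ext b
      constructor
      · intro hb hbC
        obtain ⟨a, haD, rfl⟩ := hC hbC
        rcases hb rfl with h | h
        · exact h haD
        · exact h hbC
      · intro hb a ha
        right
        simp only [Set.mem_preimage, Set.mem_singleton_iff] at ha
        rw [Set.mem_preimage, ha]
        exact hb
    have := hmem _ hcore
    exact hX _ this _ (Set.subset_union_left)
  · intro h
    simp only [alexDual, coCo, Set.mem_setOf_eq, not_forall] at h
    obtain ⟨D, hcore, hD⟩ := h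
    refine ⟨Dᶜ, by simpa [alexDual] using hD, ?_⟩
    intro b hb
    have hbC : b ∉ fCore f D := by rw [hcore]; simpa using hb
    simp only [fCore, Set.mem_setOf_eq, Set.subset_def, not_forall] at hbC
    obtain ⟨a, ha, haD⟩ := hbC
    exact ⟨a, haD, ha⟩
end

section
/- Let f : A → B be an injective function and X : Set (Set A) any family of subsets of A. Then f^{¡¡}(X) = {C : Set B | (Set.range f)ᶜ ⊆ C → f ⁻¹' C ∈ X}; that is, f^{¡¡}(X) is the union of the cone over X with apex set E = (range f)ᶜ and the cone over the boundary of the simplex on E. -/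

lemma fCore_eq_of_injective {A B : Type*} (f : A → B) (hf : Function.Injective f)
    (D : Set A) : fCore f D = f '' D ∪ (Set.range f)ᶜ := by
  ext b
  simp only [fCore, Set.mem_setOf_eq, Set.mem_union, Set.mem_compl_iff,
    Set.mem_range, Set.mem_image]
  constructor
  · intro h
    by_cases hb : ∃ a, f a = b
    · obtain ⟨a, ha⟩ := hb
      exact Or.inl ⟨a, h (by simp [ha]), ha⟩
    · exact Or.inr hb
  · rintro (⟨a, haD, rfl⟩ | hb) x hx
    · rw [hf (Set.mem_singleton_iff.mp hx)]; exact haD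
    · exact absurd ⟨x, hx⟩ hb

/-- For `f` injective, `f^{¡¡}(X)` consists of the `C ⊆ B` such that whenever
`C` contains the complement `E` of the range of `f`, the preimage of `C` is a
face of `X`: the union of the cone over `X` with apex set `E` and the cone
over the boundary of the simplex on `E`. -/
theorem coCo_of_injective {A B : Type*} (f : A → B)
    (hf : Function.Injective f) (X : Set (Set A)) :
    coCo f X = {C : Set B | (Set.range f)ᶜ ⊆ C → f ⁻¹' C ∈ X} := by
  ext C
  simp only [coCo, Set.mem_setOf_eq]
  constructor
  · intro h hE
    apply h (f ⁻¹' C)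
    rw [fCore_eq_of_injective f hf, Set.image_preimage_eq_inter_range]
    ext b
    simp only [Set.mem_union, Set.mem_inter_iff, Set.mem_compl_iff]
    constructor
    · rintro (⟨h1, _⟩ | h2)
      · exact h1
      · exact hE h2
    · intro hb
      by_cases hr : b ∈ Set.range f
      · exact Or.inl ⟨hb, hr⟩
      · exact Or.inr hr
  · intro h D hD
    rw [fCore_eq_of_injective f hf] at hD
    have hE : (Set.range f)ᶜ ⊆ C := hD ▸ Set.subset_union_right
    have := h hE
    have hpre : f ⁻¹' C = D := by
      rw [← hD, Set.preimage_union, Set.preimage_image_eq _ hf]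
      simp [Set.preimage_compl]
    rwa [hpre] at this
end

section
/- Let f : A → B be a surjective function, X a simplicial complex on A, and Y a simplicial complex on B. Then f^{**}(X) = Y if and only if f^{!*}(Y) ⊆ X and X ⊆ f^{¡*}(Y). In particular, the simplicial complexes X with f^{**}(X) = Y are precisely those in the interval between f^{!*}(Y) and f^{¡*}(Y). -/
/-- For `f` surjective, the simplicial complexes `X` with `f^{**}(X) = Y` are
precisely those in the interval between `f^{!*}(Y)` and `f^{¡*}(Y)`. -/
theorem starStar_eq_iff_between {A B : Type*} (f : A → B)
    (hf : Function.Surjective f)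
    (X : Set (Set A)) (hX : IsSimplicialComplex X)
    (Y : Set (Set B)) (hY : IsSimplicialComplex Y) :
    starStar f X = Y ↔ shriekStar f Y ⊆ X ∧ X ⊆ coStar f Y := by
  constructor
  · rintro rfl
    constructor
    · intro D hD
      exact hX _ hD D (Set.subset_preimage_image f D)
    · intro D hD
      refine hX D hD _ ?_
      intro a ha
      exact ha rfl
  · rintro ⟨h1, h2⟩
    ext C
    constructor
    · intro hC
      have : fCore f (f ⁻¹' C) = C := by
        ext b
        constructor
        · intro hb
          obtain ⟨a, rfl⟩ := hf b
          exact hb rfl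
        · intro hb a ha
          simp only [Set.mem_preimage, Set.mem_singleton_iff] at ha
          simp [Set.mem_preimage, ha, hb]
      have h3 := h2 hC
      simp only [coStar, Set.mem_setOf_eq, this] at h3
      exact h3
    · intro hC
      have : f '' (f ⁻¹' C) ∈ Y := hY C hC _ (Set.image_preimage_subset f C)
      exact h1 this
end
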